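/- arXiv:quant-ph/9605038 — 3 statements merged into one kernel-verified Lean document; each statement's English description precedes it below -/
import Mathlib

section
/- (Entanglement witness existence) For every inseparable state ρ on H₁ ⊗ H₂ there exists a Hermitian operator A on H₁ ⊗ H₂ such that Tr(Aρ) < 0 while Tr(Aσ) ≥ 0 for every separable state σ. -/
open Matrix
open scoped Kronecker ComplexOrder

/-- A quantum state: positive semidefinite operator of trace one. -/
def IsState {ι : Type*} [Fintype ι] [DecidableEq ι] (A : Matrix ι ι ℂ) : Prop :=
  A.PosSemidef ∧ A.trace = 1

/-- Finite convex combinations of product states on `C^m ⊗ C^n`. -/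
def SepCombos (m n : ℕ) : Set (Matrix (Fin m × Fin n) (Fin m × Fin n) ℂ) :=
  {ρ | ∃ (k : ℕ) (p : Fin k → ℝ) (σ : Fin k → Matrix (Fin m) (Fin m) ℂ)
      (τ : Fin k → Matrix (Fin n) (Fin n) ℂ),
      (∀ i, 0 ≤ p i) ∧ (∑ i, p i) = 1 ∧ (∀ i, IsState (σ i)) ∧ (∀ i, IsState (τ i)) ∧
      ρ = ∑ i, (p i : ℂ) • (σ i ⊗ₖ τ i)}

/-- A separable state: a state in the closure of convex combinations of product states. -/
def SepState {m n : ℕ} (ρ : Matrix (Fin m × Fin n) (Fin m × Fin n) ℂ) : Prop :=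
  IsState ρ ∧ ρ ∈ closure (SepCombos m n)

/-- A positive map: maps positive semidefinite matrices to positive semidefinite ones. -/
def IsPositiveMap {n k : ℕ}
    (Λ : Matrix (Fin n) (Fin n) ℂ →ₗ[ℂ] Matrix (Fin k) (Fin k) ℂ) : Prop :=
  ∀ A, A.PosSemidef → (Λ A).PosSemidef

/-- The map `I ⊗ Λ` acting on operators on `C^m ⊗ C^n`. -/
def idOtimes {m n k : ℕ}
    (Λ : Matrix (Fin n) (Fin n) ℂ →ₗ[ℂ] Matrix (Fin k) (Fin k) ℂ)
    (ρ : Matrix (Fin m × Fin n) (Fin m × Fin n) ℂ) :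
    Matrix (Fin m × Fin k) (Fin m × Fin k) ℂ :=
  fun p q => Λ (fun μ ν => ρ (p.1, μ) (q.1, ν)) p.2 q.2

/-- The map `Λ ⊗ I_k`. -/
def otimesId {n m : ℕ}
    (Λ : Matrix (Fin n) (Fin n) ℂ →ₗ[ℂ] Matrix (Fin m) (Fin m) ℂ) (k : ℕ)
    (A : Matrix (Fin n × Fin k) (Fin n × Fin k) ℂ) :
    Matrix (Fin m × Fin k) (Fin m × Fin k) ℂ :=
  fun p q => Λ (fun i j => A (i, p.2) (j, q.2)) p.1 q.1

/-- Complete positivity. -/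
def IsCompletelyPositive {n m : ℕ}
    (Λ : Matrix (Fin n) (Fin n) ℂ →ₗ[ℂ] Matrix (Fin m) (Fin m) ℂ) : Prop :=
  ∀ k : ℕ, ∀ A : Matrix (Fin n × Fin k) (Fin n × Fin k) ℂ,
    A.PosSemidef → (otimesId Λ k A).PosSemidef

/-- Partial transposition with respect to the second factor. -/
def ptranspose {α β : Type*} (ρ : Matrix (α × β) (α × β) ℂ) : Matrix (α × β) (α × β) ℂ :=
  fun p q => ρ (p.1, q.2) (q.1, p.2)

/-- An orthogonal projection matrix. -/
def IsProjMat {ι : Type*} [Fintype ι] (P : Matrix ι ι ℂ) : Prop :=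
  P.IsHermitian ∧ P * P = P

/-- The transpose map as a linear map. -/
def transposeLM (n : ℕ) : Matrix (Fin n) (Fin n) ℂ →ₗ[ℂ] Matrix (Fin n) (Fin n) ℂ where
  toFun := Matrix.transpose
  map_add' := fun _ _ => Matrix.transpose_add _ _
  map_smul' := fun _ _ => Matrix.transpose_smul _ _


instance matLCS (ι κ : Type*) : LocallyConvexSpace ℝ (Matrix ι κ ℂ) :=
  Pi.locallyConvexSpace (X := fun _ : ι => κ → ℂ)

lemma real_smul_mat {ι κ : Type*} (r : ℝ) (M : Matrix ι κ ℂ) : (r : ℂ) • M = r • M := by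
  ext i j; simp [Matrix.smul_apply, Complex.real_smul]

lemma convex_sepCombos (m n : ℕ) : Convex ℝ (SepCombos m n) := by
  rintro a ⟨k₁, p₁, σ₁, τ₁, hp₁, hs₁, hσ₁, hτ₁, rfl⟩ b ⟨k₂, p₂, σ₂, τ₂, hp₂, hs₂, hσ₂, hτ₂, rfl⟩
    s t hs ht hst
  refine ⟨k₁ + k₂, Fin.append (fun i => s * p₁ i) (fun i => t * p₂ i),
    Fin.append σ₁ σ₂, Fin.append τ₁ τ₂, ?_, ?_, ?_, ?_, ?_⟩
  · intro i
    refine Fin.addCases (fun i => ?_) (fun i => ?_) i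
    · simpa [Fin.append_left] using mul_nonneg hs (hp₁ i)
    · simpa [Fin.append_right] using mul_nonneg ht (hp₂ i)
  · rw [Fin.sum_univ_add]
    simp only [Fin.append_left, Fin.append_right, ← Finset.mul_sum, hs₁, hs₂]
    simpa using hst
  · intro i
    refine Fin.addCases (fun i => ?_) (fun i => ?_) i
    · simpa [Fin.append_left] using hσ₁ i
    · simpa [Fin.append_right] using hσ₂ i
  · intro i
    refine Fin.addCases (fun i => ?_) (fun i => ?_) i
    · simpa [Fin.append_left] using hτ₁ i
    · simpa [Fin.append_right] using hτ₂ i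
  · rw [Fin.sum_univ_add]
    simp only [Fin.append_left, Fin.append_right, Complex.ofReal_mul, mul_smul]
    rw [← Finset.smul_sum, ← Finset.smul_sum, real_smul_mat, real_smul_mat]

lemma stdBasisMatrix_complex_decomp {ι κ : Type*} [DecidableEq ι] [DecidableEq κ]
    (i : ι) (j : κ) (z : ℂ) :
    Matrix.single i j z =
      z.re • Matrix.single i j 1 + z.im • (Complex.I • Matrix.single i j 1) := by
  ext a b
  simp only [Matrix.single, Matrix.add_apply, Matrix.smul_apply, Matrix.of_apply]
  by_cases h : i = a ∧ j = b <;>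
    simp [h, Complex.real_smul, Complex.ext_iff]

/-- Every continuous real-linear functional on complex matrices is `X ↦ Re Tr (B X)`. -/
lemma exists_matrix_repr {ι : Type*} [Fintype ι] [DecidableEq ι]
    (f : Matrix ι ι ℂ →L[ℝ] ℝ) :
    ∃ B : Matrix ι ι ℂ, ∀ X : Matrix ι ι ℂ, ((B * X).trace).re = f X := by
  refine ⟨Matrix.of fun i j => (f (Matrix.single j i 1) : ℂ) -
      Complex.I * (f (Complex.I • Matrix.single j i 1) : ℂ), fun X => ?_⟩
  have hX := matrix_eq_sum_single X
  conv_rhs => rw [hX]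
  rw [map_sum]
  have htr : ((Matrix.of fun i j => (f (Matrix.single j i 1) : ℂ) -
      Complex.I * (f (Complex.I • Matrix.single j i 1) : ℂ)) * X).trace
      = ∑ i, ∑ j, ((f (Matrix.single j i 1) : ℂ) -
        Complex.I * (f (Complex.I • Matrix.single j i 1) : ℂ)) * X j i := by
    simp [Matrix.trace, Matrix.diag, Matrix.mul_apply]
  rw [htr]
  simp only [Complex.re_sum]
  rw [Finset.sum_comm]
  refine Finset.sum_congr rfl fun j _ => ?_
  rw [map_sum]
  refine Finset.sum_congr rfl fun i _ => ?_
  conv_rhs => rw [stdBasisMatrix_complex_decomp, map_add, _root_.map_smul, _root_.map_smul]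
  simp [Complex.sub_re, Complex.mul_re, Complex.mul_im]
  ring

/-- existence of an entanglement witness for any inseparable state. -/
theorem entanglement_witness_exists {m n : ℕ}
    (ρ : Matrix (Fin m × Fin n) (Fin m × Fin n) ℂ)
    (hρ : IsState ρ) (hins : ¬ SepState ρ) :
    ∃ A : Matrix (Fin m × Fin n) (Fin m × Fin n) ℂ, A.IsHermitian ∧
      (A * ρ).trace < 0 ∧ ∀ σ, SepState σ → 0 ≤ (A * σ).trace := by
  have hρnot : ρ ∉ closure (SepCombos m n) := fun hmem => hins ⟨hρ, hmem⟩
  obtain ⟨f, u, hfρ, hfsep⟩ := geometric_hahn_banach_point_closed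
    ((convex_sepCombos m n).closure) isClosed_closure hρnot
  obtain ⟨B, hB⟩ := exists_matrix_repr f
  -- trace formula for the Hermitian part of B against Hermitian matrices
  set A0 : Matrix (Fin m × Fin n) (Fin m × Fin n) ℂ := (1/2 : ℂ) • (B + Bᴴ) with hA0
  have hA0herm : A0.IsHermitian := by
    unfold Matrix.IsHermitian
    rw [hA0, conjTranspose_smul, conjTranspose_add, conjTranspose_conjTranspose]
    rw [add_comm]
    congr 1
    simp [Complex.ext_iff]
  have htrace : ∀ X : Matrix (Fin m × Fin n) (Fin m × Fin n) ℂ, X.IsHermitian →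
      (A0 * X).trace = ((f X : ℝ) : ℂ) := by
    intro X hX
    have h1 : (Bᴴ * X).trace = star ((B * X).trace) := by
      rw [← Matrix.trace_conjTranspose, Matrix.conjTranspose_mul, hX.eq,
        Matrix.trace_mul_comm]
    have : (A0 * X).trace = (1/2 : ℂ) * ((B * X).trace + star ((B * X).trace)) := by
      rw [hA0, Matrix.smul_mul, Matrix.trace_smul, Matrix.add_mul, Matrix.trace_add, h1]
      simp [smul_eq_mul]
    rw [this, Complex.star_def, Complex.add_conj, hB X]
    push_cast
    ring
  set A : Matrix (Fin m × Fin n) (Fin m × Fin n) ℂ := A0 - (u : ℂ) • 1 with hA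
  have hAherm : A.IsHermitian := by
    unfold Matrix.IsHermitian
    rw [hA, conjTranspose_sub, hA0herm.eq, conjTranspose_smul, conjTranspose_one,
      Complex.star_def, Complex.conj_ofReal]
  have hAtrace : ∀ X : Matrix (Fin m × Fin n) (Fin m × Fin n) ℂ, X.IsHermitian →
      X.trace = 1 → (A * X).trace = ((f X - u : ℝ) : ℂ) := by
    intro X hX htr
    rw [hA, Matrix.sub_mul, Matrix.trace_sub, htrace X hX, Matrix.smul_mul,
      Matrix.trace_smul, Matrix.one_mul, htr]
    push_cast [smul_eq_mul]
    ring
  refine ⟨A, hAherm, ?_, ?_⟩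
  · rw [hAtrace ρ hρ.1.isHermitian hρ.2]
    rw [show (0 : ℂ) = ((0 : ℝ) : ℂ) by norm_num, Complex.real_lt_real]
    linarith
  · intro σ hσ
    rw [hAtrace σ hσ.1.1.isHermitian hσ.1.2]
    rw [Complex.zero_le_real]
    have := hfsep σ hσ.2
    linarith
end

section
/- If A is an operator on H₁ ⊗ H₂ such that Tr(A (P ⊗ Q)) ≥ 0 (i.e., is real and nonnegative) for all orthogonal projections P on H₁ and Q on H₂, then A is Hermitian. -/
/-!
For `v`, `w` and the orthogonal projections `P_v`, `P_w` onto their spans,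
`Tr (A (P_v ⊗ P_w)) = ⟨v ⊗ w, A (v ⊗ w)⟩ / (‖v‖² ‖w‖²)`, so the hypothesis makes the quadratic
form of `A` real, hence that of `A - Aᴴ` zero, on product vectors. Over `ℂ` a matrix whose
quadratic form vanishes is zero (polarization). Applied to the compression
`(a, c) ↦ ⟨w, (A - Aᴴ)_{ac} w⟩` for fixed `w`, and then to each block `(A - Aᴴ)_{ac}`, this
gives `A - Aᴴ = 0`.
-/

open Matrix
open scoped Kronecker ComplexOrder

namespace Matrix

variable {α β R : Type*}

def kroneckerVec [Mul R] (v : α → R) (w : β → R) : α × β → R := fun p => v p.1 * w p.2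

theorem star_kroneckerVec [CommMonoid R] [StarMul R] (v : α → R) (w : β → R) :
    star (kroneckerVec v w) = kroneckerVec (star v) (star w) := by
  ext p
  simp [kroneckerVec]

theorem vecMulVec_kronecker_vecMulVec [CommMonoid R] (u v : α → R) (w z : β → R) :
    vecMulVec u v ⊗ₖ vecMulVec w z = vecMulVec (kroneckerVec u w) (kroneckerVec v z) := by
  ext ⟨a, b⟩ ⟨c, d⟩
  exact mul_mul_mul_comm _ _ _ _

variable [Fintype α] [Fintype β]

theorem kroneckerVec_dotProduct_mulVec_kroneckerVec [CommSemiring R]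
    (M : Matrix (α × β) (α × β) R) (u v : α → R) (w z : β → R) :
    kroneckerVec u w ⬝ᵥ M *ᵥ kroneckerVec v z
      = u ⬝ᵥ (fun a c => w ⬝ᵥ (fun b d => M (a, b) (c, d)) *ᵥ z) *ᵥ v := by
  simp only [kroneckerVec, dotProduct, mulVec, Fintype.sum_prod_type, Finset.mul_sum,
    Finset.sum_mul]
  refine Finset.sum_congr rfl fun a _ => ?_
  rw [Finset.sum_comm]
  refine Finset.sum_congr rfl fun c _ => Finset.sum_congr rfl fun b _ =>
    Finset.sum_congr rfl fun d _ => ?_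
  ring

theorem trace_mul_vecMulVec [CommSemiring R] (M : Matrix α α R) (x y : α → R) :
    trace (M * vecMulVec x y) = y ⬝ᵥ M *ᵥ x := by
  rw [mul_vecMulVec, trace_vecMulVec, dotProduct_comm]

theorem star_dotProduct_conjTranspose_mulVec [CommSemiring R] [StarRing R]
    (M : Matrix α α R) (x : α → R) : star x ⬝ᵥ Mᴴ *ᵥ x = star (star x ⬝ᵥ M *ᵥ x) := by
  rw [← star_dotProduct, star_mulVec, ← dotProduct_mulVec]

theorem eq_zero_of_forall_star_dotProduct_mulVec_self_eq_zero [DecidableEq α]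
    {M : Matrix α α ℂ} (h : ∀ x, star x ⬝ᵥ M *ᵥ x = 0) : M = 0 := by
  have : M.toEuclideanLin = 0 := by
    refine (inner_map_self_eq_zero _).1 fun x => ?_
    rw [EuclideanSpace.inner_eq_star_dotProduct, dotProduct_comm, star_dotProduct]
    simp [h]
  simpa using this

theorem eq_zero_of_forall_star_dotProduct_mulVec_kroneckerVec_eq_zero [DecidableEq α]
    [DecidableEq β] {M : Matrix (α × β) (α × β) ℂ}
    (h : ∀ v w, star (kroneckerVec v w) ⬝ᵥ M *ᵥ kroneckerVec v w = 0) : M = 0 := by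
  have hcompress : ∀ w : β → ℂ,
      (fun a c => star w ⬝ᵥ (fun b d => M (a, b) (c, d)) *ᵥ w : Matrix α α ℂ) = 0 :=
    fun w => eq_zero_of_forall_star_dotProduct_mulVec_self_eq_zero fun v => by
      rw [← h v w, star_kroneckerVec, kroneckerVec_dotProduct_mulVec_kroneckerVec]
  ext ⟨a, b⟩ ⟨c, d⟩
  have hblock : (fun b d => M (a, b) (c, d) : Matrix β β ℂ) = 0 :=
    eq_zero_of_forall_star_dotProduct_mulVec_self_eq_zero fun w =>
      congrFun (congrFun (hcompress w) a) c
  exact congrFun (congrFun hblock b) d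

end Matrix

section RankOneProjection

variable {ι : Type*} [Fintype ι]

-- For `v = 0` the inverse is the junk value `0⁻¹ = 0`, so `rankOneProj 0 = 0`, still a projection.
noncomputable def rankOneProj (v : ι → ℂ) : Matrix ι ι ℂ := (star v ⬝ᵥ v)⁻¹ • vecMulVec v (star v)

theorem star_dotProduct_self_smul_rankOneProj (v : ι → ℂ) :
    (star v ⬝ᵥ v) • rankOneProj v = vecMulVec v (star v) := by
  rcases eq_or_ne v 0 with rfl | hv
  · simp [rankOneProj]
  · rw [rankOneProj, smul_smul, mul_inv_cancel₀ (by rwa [Ne, dotProduct_star_self_eq_zero]),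
      one_smul]

theorem isProjMat_rankOneProj (v : ι → ℂ) : IsProjMat (rankOneProj v) := by
  have hnorm : IsSelfAdjoint (star v ⬝ᵥ v) := (star_dotProduct v v).symm
  refine ⟨?_, ?_⟩
  · rw [IsHermitian, rankOneProj, conjTranspose_smul, conjTranspose_vecMulVec, star_star,
      star_inv₀, hnorm.star_eq]
  · rcases eq_or_ne v 0 with rfl | hv
    · simp [rankOneProj]
    rw [rankOneProj, smul_mul_smul, vecMulVec_mul_vecMulVec, vecMulVec_smul, smul_smul,
      mul_assoc, inv_mul_cancel₀ (by rwa [Ne, dotProduct_star_self_eq_zero]), mul_one]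

theorem star_kroneckerVec_dotProduct_mulVec_kroneckerVec_eq_trace {α β : Type*} [Fintype α]
    [Fintype β] (A : Matrix (α × β) (α × β) ℂ) (v : α → ℂ) (w : β → ℂ) :
    star (kroneckerVec v w) ⬝ᵥ A *ᵥ kroneckerVec v w
      = (star v ⬝ᵥ v * (star w ⬝ᵥ w)) * (A * (rankOneProj v ⊗ₖ rankOneProj w)).trace := by
  rw [star_kroneckerVec, ← trace_mul_vecMulVec, ← vecMulVec_kronecker_vecMulVec,
    ← star_dotProduct_self_smul_rankOneProj v, ← star_dotProduct_self_smul_rankOneProj w,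
    smul_kronecker, kronecker_smul, Matrix.mul_smul, Matrix.mul_smul, trace_smul, trace_smul,
    smul_eq_mul, smul_eq_mul, mul_assoc]

end RankOneProjection

/-- if `Tr(A (P ⊗ Q)) ≥ 0` for all projections then `A` is Hermitian. -/
theorem hermitian_of_nonneg_on_product_projectors {m n : ℕ}
    (A : Matrix (Fin m × Fin n) (Fin m × Fin n) ℂ)
    (h : ∀ (P : Matrix (Fin m) (Fin m) ℂ) (Q : Matrix (Fin n) (Fin n) ℂ),
      IsProjMat P → IsProjMat Q → 0 ≤ (A * (P ⊗ₖ Q)).trace) :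
    A.IsHermitian := by
  have hquad : ∀ v w, 0 ≤ star (kroneckerVec v w) ⬝ᵥ A *ᵥ kroneckerVec v w := fun v w => by
    rw [star_kroneckerVec_dotProduct_mulVec_kroneckerVec_eq_trace]
    exact mul_nonneg
      (mul_nonneg (dotProduct_star_self_nonneg v) (dotProduct_star_self_nonneg w))
      (h _ _ (isProjMat_rankOneProj v) (isProjMat_rankOneProj w))
  have hskew : A - Aᴴ = 0 := eq_zero_of_forall_star_dotProduct_mulVec_kroneckerVec_eq_zero
    fun v w => by
      rw [sub_mulVec, dotProduct_sub, star_dotProduct_conjTranspose_mulVec,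
        (hquad v w).isSelfAdjoint.star_eq, sub_self]
  exact (sub_eq_zero.1 hskew).symm
end

section
/- If ρ is a separable state on H₁ ⊗ H₂ and Λ is a positive linear map from operators on H₂ to operators on H₁, then (I ⊗ Λ)(ρ) is a positive semidefinite operator. -/
open Matrix
open scoped Kronecker ComplexOrder

lemma my_isClosed_posSemidef {ι : Type*} [Fintype ι] :
    IsClosed {A : Matrix ι ι ℂ | A.PosSemidef} := by
  have h0 : IsClosed {z : ℂ | 0 ≤ z} := by
    have : {z : ℂ | 0 ≤ z} = Complex.re ⁻¹' Set.Ici 0 ∩ Complex.im ⁻¹' {0} := by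
      ext z
      simp [Complex.le_def, eq_comm]
    rw [this]
    exact (isClosed_Ici.preimage Complex.continuous_re).inter
      (isClosed_singleton.preimage Complex.continuous_im)
  have : {A : Matrix ι ι ℂ | A.PosSemidef} =
      {A : Matrix ι ι ℂ | Aᴴ = A} ∩ ⋂ x : ι → ℂ, {A | 0 ≤ star x ⬝ᵥ A *ᵥ x} := by
    ext A
    simp [Matrix.posSemidef_iff_dotProduct_mulVec, Matrix.IsHermitian, Set.mem_iInter]
  rw [this]
  refine (isClosed_eq continuous_id.matrix_conjTranspose continuous_id).inter
    (isClosed_iInter fun x => ?_)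
  exact h0.preimage (continuous_const.dotProduct
    (continuous_id.matrix_mulVec continuous_const))

lemma my_kron_psd {m n : ℕ} {A : Matrix (Fin m) (Fin m) ℂ} {B : Matrix (Fin n) (Fin n) ℂ}
    (hA : A.PosSemidef) (hB : B.PosSemidef) : (A ⊗ₖ B).PosSemidef := by
  obtain ⟨C, rfl⟩ : ∃ C : Matrix (Fin m) (Fin m) ℂ, A = Cᴴ * C := by
    open scoped MatrixOrder in exact CStarAlgebra.nonneg_iff_eq_star_mul_self.mp hA.nonneg
  obtain ⟨D, rfl⟩ : ∃ D : Matrix (Fin n) (Fin n) ℂ, B = Dᴴ * D := by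
    open scoped MatrixOrder in exact CStarAlgebra.nonneg_iff_eq_star_mul_self.mp hB.nonneg
  have hct : (Cᴴ * C) ⊗ₖ (Dᴴ * D) = (C ⊗ₖ D)ᴴ * (C ⊗ₖ D) := by
    rw [Matrix.mul_kronecker_mul]
    congr 1
    ext ⟨a, b⟩ ⟨c, d⟩
    simp [Matrix.conjTranspose_apply, Matrix.kroneckerMap_apply]
  rw [hct]
  exact Matrix.posSemidef_conjTranspose_mul_self _

lemma my_smul_psd {ι : Type*} [Fintype ι] {A : Matrix ι ι ℂ} (hA : A.PosSemidef) {p : ℝ}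
    (hp : 0 ≤ p) : ((p : ℂ) • A).PosSemidef := by
  rw [Matrix.posSemidef_iff_dotProduct_mulVec] at hA ⊢
  constructor
  · have : ((p : ℂ) • A)ᴴ = (star (p : ℂ)) • Aᴴ := Matrix.conjTranspose_smul _ _
    rw [Matrix.IsHermitian, this, hA.1, Complex.star_def, Complex.conj_ofReal]
  · intro x
    have := hA.2 x
    simp only [Matrix.smul_mulVec, dotProduct_smul, smul_eq_mul]
    exact mul_nonneg (by exact_mod_cast hp) this

lemma my_cont {m n k : ℕ}
    (Λ : Matrix (Fin n) (Fin n) ℂ →ₗ[ℂ] Matrix (Fin k) (Fin k) ℂ) :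
    Continuous (idOtimes (m := m) Λ) := by
  have hΛc : Continuous Λ := Λ.continuous_of_finiteDimensional
  refine continuous_matrix fun p q => ?_
  exact (hΛc.comp (continuous_matrix fun μ ν =>
    continuous_id.matrix_elem (p.1, μ) (q.1, ν))).matrix_elem p.2 q.2

lemma my_combo {m n : ℕ} (Λ : Matrix (Fin n) (Fin n) ℂ →ₗ[ℂ] Matrix (Fin m) (Fin m) ℂ)
    (k : ℕ) (p : Fin k → ℝ) (σ : Fin k → Matrix (Fin m) (Fin m) ℂ)
    (τ : Fin k → Matrix (Fin n) (Fin n) ℂ) :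
    idOtimes Λ (∑ i, (p i : ℂ) • (σ i ⊗ₖ τ i)) = ∑ i, (p i : ℂ) • (σ i ⊗ₖ Λ (τ i)) := by
  ext ⟨a, b⟩ ⟨c, d⟩
  show Λ (fun μ ν => (∑ i, (p i : ℂ) • (σ i ⊗ₖ τ i)) (a, μ) (c, ν)) b d = _
  have h1 : (fun μ ν => (∑ i, (p i : ℂ) • (σ i ⊗ₖ τ i)) (a, μ) (c, ν))
      = ∑ i, ((p i : ℂ) * σ i a c) • τ i := by
    ext μ ν
    simp [Matrix.sum_apply, Matrix.kroneckerMap_apply, mul_assoc]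
  rw [h1, map_sum]
  simp [Matrix.sum_apply, Matrix.kroneckerMap_apply, mul_assoc]

lemma my_sum_psd {ι : ℕ} {κ : Type*} [Fintype κ] (f : Fin ι → Matrix κ κ ℂ)
    (hf : ∀ i, (f i).PosSemidef) : (∑ i, f i).PosSemidef :=
  Finset.sum_induction f _ (fun _ _ ha hb => ha.add hb) Matrix.PosSemidef.zero
    (fun i _ => hf i)

/-- `(I ⊗ Λ)(ρ)` is positive semidefinite for separable `ρ` and positive `Λ`. -/
theorem idOtimes_posMap_of_separable {m n : ℕ}
    (ρ : Matrix (Fin m × Fin n) (Fin m × Fin n) ℂ) (hρ : SepState ρ)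
    (Λ : Matrix (Fin n) (Fin n) ℂ →ₗ[ℂ] Matrix (Fin m) (Fin m) ℂ)
    (hΛ : IsPositiveMap Λ) :
    (idOtimes Λ ρ).PosSemidef := by
  obtain ⟨_, hcl⟩ := hρ
  have hmaps : Set.MapsTo (idOtimes (m := m) Λ) (SepCombos m n) {A | A.PosSemidef} := by
    rintro ρ' ⟨k, p, σ, τ, hp, _, hσ, hτ, rfl⟩
    rw [my_combo]
    exact my_sum_psd _ fun i => my_smul_psd (my_kron_psd (hσ i).1 (hΛ _ (hτ i).1)) (hp i)
  exact my_isClosed_posSemidef.closure_subset (map_mem_closure (my_cont Λ) hcl hmaps)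
end
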